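/- arXiv:2006.03336 — 6 statements merged into one kernel-verified Lean document; each statement's English description precedes it below -/
import Mathlib

section
/- For a real parameter g with |g| ≤ 1, the integral ∫₀^{2π} (1 - g·cos θ)·log(1 - g·cos θ) dθ/(2π) equals 1 - √(1 - g²) + log((1 + √(1 - g²))/2). -/
/-!
For `|g| < 1` put `s = √(1 - g²)` and `z = g / (1 + s)`, so that `|z| < 1` and
`1 - g cos θ = (1 + s)/2 · |1 - z e^{iθ}|²`. Taking real parts in `-log (1 - w) = ∑ wⁿ/n`
gives the Fourier series `log |1 - z e^{iθ}|² = -2 ∑ zⁿ cos (nθ) / n`; integrated term by term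
against `1` and `cos θ` it has mean `0` and first coefficient `-z`. Hence the average of
`(1 - g cos θ) log (1 - g cos θ)` is `log ((1 + s)/2) + g z`, and `g z = 1 - s`. Both sides are
continuous in `g`, which extends the identity to `|g| = 1`.
-/

open Real MeasureTheory

theorem integral_cos_int_mul_zero_two_pi (k : ℤ) :
    ∫ θ in (0:ℝ)..2 * π, cos (k * θ) = if k = 0 then 2 * π else 0 := by
  split_ifs with hk
  · simp [hk]
  · have hk' : (k : ℝ) ≠ 0 := Int.cast_ne_zero.mpr hk
    rw [intervalIntegral.integral_comp_mul_left (fun x => cos x) hk', integral_cos,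
      show (k : ℝ) * (2 * π) = (2 * k : ℤ) * π by push_cast; ring, sin_int_mul_pi]
    simp

theorem integral_cos_nat_mul_mul_cos_nat_mul (m : ℕ) {n : ℕ} (hn : n ≠ 0) :
    ∫ θ in (0:ℝ)..2 * π, cos (m * θ) * cos (n * θ) = if m = n then π else 0 := by
  have h : ∀ θ : ℝ, cos (m * θ) * cos (n * θ)
      = cos (((m - n : ℤ) : ℝ) * θ) / 2 + cos (((m + n : ℤ) : ℝ) * θ) / 2 := by
    intro θ
    push_cast
    rw [sub_mul, add_mul, cos_sub, cos_add]
    ring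
  simp_rw [h]
  rw [intervalIntegral.integral_add (Continuous.intervalIntegrable (by fun_prop) _ _)
      (Continuous.intervalIntegrable (by fun_prop) _ _), intervalIntegral.integral_div,
    intervalIntegral.integral_div, integral_cos_int_mul_zero_two_pi,
    integral_cos_int_mul_zero_two_pi]
  have hsub : (m - n : ℤ) = 0 ↔ m = n := by omega
  have hadd : (m + n : ℤ) ≠ 0 := by omega
  simp only [hsub, hadd, if_false]
  split_ifs <;> ring

theorem sq_norm_one_sub_mul_exp_mul_I (z θ : ℝ) :
    ‖1 - z * Complex.exp (θ * Complex.I)‖ ^ 2 = 1 - 2 * z * cos θ + z ^ 2 := by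
  rw [Complex.sq_norm, Complex.normSq_apply]
  simp only [Complex.sub_re, Complex.sub_im, Complex.one_re, Complex.one_im, Complex.re_ofReal_mul,
    Complex.im_ofReal_mul, Complex.exp_ofReal_mul_I_re, Complex.exp_ofReal_mul_I_im]
  linear_combination z ^ 2 * sin_sq_add_cos_sq θ

theorem hasSum_neg_log_one_sub_two_mul_cos_add_sq {z : ℝ} (hz : |z| < 1) (θ : ℝ) :
    HasSum (fun n : ℕ => 2 * z ^ n / n * cos (n * θ)) (-log (1 - 2 * z * cos θ + z ^ 2)) := by
  set w : ℂ := z * Complex.exp (θ * Complex.I)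
  have hw : ‖w‖ < 1 := by simpa [w, Complex.norm_exp_ofReal_mul_I] using hz
  have hre : ∀ n : ℕ, (w ^ n / n).re = z ^ n / n * cos (n * θ) := by
    intro n
    have hpow : w ^ n = ((z ^ n : ℝ) : ℂ) * Complex.exp ((n * θ : ℝ) * Complex.I) := by
      rw [mul_pow, ← Complex.exp_nat_mul]
      push_cast
      ring_nf
    rw [hpow, ← Complex.ofReal_natCast, mul_div_right_comm, ← Complex.ofReal_div,
      Complex.re_ofReal_mul, Complex.exp_ofReal_mul_I_re]
  have hlog : log (1 - 2 * z * cos θ + z ^ 2) = 2 * log ‖1 - w‖ := by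
    rw [← sq_norm_one_sub_mul_exp_mul_I, Real.log_pow, Nat.cast_ofNat]
  have := (Complex.hasSum_re (Complex.hasSum_taylorSeries_neg_log hw)).mul_left 2
  simp only [hre, Complex.neg_re, Complex.log_re] at this
  rw [hlog]
  simpa only [mul_div_assoc, mul_assoc, mul_neg] using this

theorem abs_two_mul_pow_div_nat_le (z : ℝ) (n : ℕ) : |2 * z ^ n / n| ≤ 2 * |z| ^ n := by
  rcases eq_or_ne n 0 with rfl | hn
  · simp
  · rw [abs_div, Nat.abs_cast, abs_mul, abs_two, abs_pow]
    exact div_le_self (by positivity) (by exact_mod_cast Nat.one_le_iff_ne_zero.mpr hn)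

-- At `m = 0` the right-hand side is `0` through division by zero, which is the correct value.
theorem integral_cos_nat_mul_mul_log_one_sub_two_mul_cos_add_sq {z : ℝ} (hz : |z| < 1) (m : ℕ) :
    ∫ θ in (0:ℝ)..2 * π, cos (m * θ) * log (1 - 2 * z * cos θ + z ^ 2) = -(2 * π * z ^ m / m) := by
  set F : ℕ → ℝ → ℝ := fun n θ => cos (m * θ) * (2 * z ^ n / n * cos (n * θ))
  have hF : ∀ n, ∫ θ in (0:ℝ)..2 * π, F n θ = if n = m then 2 * π * z ^ m / m else 0 := by
    intro n
    simp only [F, mul_left_comm (cos _), intervalIntegral.integral_const_mul]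
    rcases eq_or_ne n 0 with rfl | hn
    · split_ifs with h
      · simp [← h]
      · simp
    · rw [integral_cos_nat_mul_mul_cos_nat_mul m hn]
      rcases eq_or_ne n m with rfl | h
      · simp only [if_true]; ring
      · simp [h, h.symm]
  have hsum : HasSum (fun n => ∫ θ in (0:ℝ)..2 * π, F n θ)
      (∫ θ in (0:ℝ)..2 * π, -(cos (m * θ) * log (1 - 2 * z * cos θ + z ^ 2))) := by
    refine intervalIntegral.hasSum_integral_of_dominated_convergence (fun n _ => 2 * |z| ^ n)
      (fun n => Continuous.aestronglyMeasurable (by fun_prop)) (fun n => ?_)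
      (.of_forall fun _ _ => (summable_geometric_of_lt_one (abs_nonneg z) hz).mul_left 2)
      intervalIntegrable_const
      (.of_forall fun θ _ => ?_)
    · refine .of_forall fun θ _ => ?_
      rw [Real.norm_eq_abs, abs_mul, abs_mul]
      have hcoef := abs_two_mul_pow_div_nat_le z n
      have hcos_m := abs_cos_le_one (m * θ)
      have hcos_n := abs_cos_le_one (n * θ)
      calc |cos (m * θ)| * (|2 * z ^ n / n| * |cos (n * θ)|) ≤ 1 * (2 * |z| ^ n * 1) := by gcongr
        _ = 2 * |z| ^ n := by ring
    · simpa only [mul_neg] using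
        (hasSum_neg_log_one_sub_two_mul_cos_add_sq hz θ).mul_left (cos (m * θ))
  rw [← neg_neg (∫ θ in (0:ℝ)..2 * π, _), ← intervalIntegral.integral_neg,
    hsum.unique ((hasSum_ite_eq m _).congr_fun hF)]

theorem one_sub_two_mul_cos_add_sq_pos {z : ℝ} (hz : |z| < 1) (θ : ℝ) :
    0 < 1 - 2 * z * cos θ + z ^ 2 := by
  have hcos : z * cos θ ≤ |z| := calc
    z * cos θ ≤ |z| * |cos θ| := abs_mul z (cos θ) ▸ le_abs_self _
    _ ≤ |z| := mul_le_of_le_one_right (abs_nonneg z) (abs_cos_le_one θ)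
  nlinarith [sq_abs z]

theorem integral_one_sub_mul_cos_mul_log_of_abs_lt {g : ℝ} (hg : |g| < 1) :
    (∫ θ in (0:ℝ)..2 * π, (1 - g * cos θ) * log (1 - g * cos θ)) / (2 * π)
      = 1 - √(1 - g ^ 2) + log ((1 + √(1 - g ^ 2)) / 2) := by
  have hg2 : g ^ 2 < 1 := (sq_lt_one_iff_abs_lt_one g).mpr hg
  set s := √(1 - g ^ 2)
  have hs2 : s ^ 2 = 1 - g ^ 2 := sq_sqrt (by linarith)
  have hs : 0 < s := sqrt_pos.mpr (by linarith)
  set z := g / (1 + s) with hz_def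
  have hz : |z| < 1 := by
    rw [abs_div, abs_of_pos (show 0 < 1 + s by linarith), div_lt_one (by linarith)]
    linarith
  have hgz : g * z = 1 - s := by
    rw [hz_def]
    field_simp
    linear_combination hs2
  set Q := fun θ => 1 - 2 * z * cos θ + z ^ 2 with hQ_def
  have hQ_pos : ∀ θ, 0 < Q θ := one_sub_two_mul_cos_add_sq_pos hz
  have hfactor : ∀ θ, 1 - g * cos θ = (1 + s) / 2 * Q θ := by
    intro θ
    rw [hQ_def, hz_def]
    field_simp
    linear_combination -hs2
  have hsplit : ∀ θ, (1 - g * cos θ) * log (1 - g * cos θ)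
      = log ((1 + s) / 2) * (1 - g * cos θ) + (log (Q θ) - g * (cos θ * log (Q θ))) := by
    intro θ
    have hlog : log (1 - g * cos θ) = log ((1 + s) / 2) + log (Q θ) := by
      rw [hfactor θ, log_mul (by positivity) (hQ_pos θ).ne']
    rw [hlog]
    ring
  have hlogQ : Continuous fun θ => log (Q θ) :=
    Continuous.log (by fun_prop) fun θ => (hQ_pos θ).ne'
  have hI : IntervalIntegrable (fun θ => log (Q θ)) volume 0 (2 * π) :=
    hlogQ.intervalIntegrable _ _
  have hI' : IntervalIntegrable (fun θ => g * (cos θ * log (Q θ))) volume 0 (2 * π) :=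
    (continuous_const.mul (continuous_cos.mul hlogQ)).intervalIntegrable _ _
  have hmean : ∫ θ in (0:ℝ)..2 * π, log (Q θ) = 0 := by
    simpa using integral_cos_nat_mul_mul_log_one_sub_two_mul_cos_add_sq hz 0
  have hfirst : ∫ θ in (0:ℝ)..2 * π, cos θ * log (Q θ) = -(2 * π * z) := by
    simpa using integral_cos_nat_mul_mul_log_one_sub_two_mul_cos_add_sq hz 1
  have hweight : ∫ θ in (0:ℝ)..2 * π, (1 - g * cos θ) = 2 * π := by
    simp [intervalIntegral.integral_sub, integral_cos]
  simp_rw [hsplit]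
  rw [intervalIntegral.integral_add (Continuous.intervalIntegrable (by fun_prop) _ _) (hI.sub hI'),
    intervalIntegral.integral_sub hI hI', intervalIntegral.integral_const_mul,
    intervalIntegral.integral_const_mul, hweight, hmean, hfirst]
  field_simp
  linear_combination 2 * π * hgz

theorem continuous_integral_mul_log_one_sub_mul_cos :
    Continuous fun g : ℝ => ∫ θ in (0:ℝ)..2 * π, (1 - g * cos θ) * log (1 - g * cos θ) := by
  apply intervalIntegral.continuous_parametric_intervalIntegral_of_continuous'
  exact continuous_mul_log.comp (by fun_prop : Continuous fun p : ℝ × ℝ => 1 - p.1 * cos p.2)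

/-- For `|g| ≤ 1`, the entropy integral
`∫₀^{2π} (1 - g cos θ) log(1 - g cos θ) dθ/(2π) = 1 - √(1-g²) + log((1+√(1-g²))/2)`. -/
theorem gross_witten_entropy (g : ℝ) (hg : |g| ≤ 1) :
    (∫ θ in (0:ℝ)..(2 * π), (1 - g * Real.cos θ) * Real.log (1 - g * Real.cos θ)) / (2 * π)
      = 1 - Real.sqrt (1 - g ^ 2) + Real.log ((1 + Real.sqrt (1 - g ^ 2)) / 2) := by
  have hrhs : Continuous fun g : ℝ => 1 - √(1 - g ^ 2) + log ((1 + √(1 - g ^ 2)) / 2) :=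
    (by fun_prop : Continuous fun g : ℝ => 1 - √(1 - g ^ 2)).add
      (Continuous.log (by fun_prop) fun _ => by positivity)
  have hclosed : Set.EqOn _ _ (closure (Set.Ioo (-1 : ℝ) 1)) :=
    Set.EqOn.closure
      (by exact fun x hx => integral_one_sub_mul_cos_mul_log_of_abs_lt (abs_lt.mpr hx))
      (continuous_integral_mul_log_one_sub_mul_cos.div_const (2 * π)) hrhs
  rw [closure_Ioo (by norm_num)] at hclosed
  exact hclosed (abs_le.mp hg)
end

section
/- The integral ∫₀^{2π} (1 - cos θ)·log(1 - cos θ) dθ/(2π) equals 1 - log 2. -/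
/-!
Since `1 - cos θ = 2 sin² (θ / 2)`, the integral of `log (1 - cos θ)` over a period reduces to the
classical `∫₀^π log (sin x) = -π log 2`, giving `-2π log 2`. The remaining part
`∫ cos θ log (1 - cos θ)` is integrated by parts: `sin θ log (1 - cos θ) - θ - sin θ` is an
antiderivative, and its boundary term vanishes at `0` and `2π`, giving `-2π`.
-/

open Real Set intervalIntegral

theorem one_sub_cos_eq_two_mul_sin_half_sq (θ : ℝ) : 1 - cos θ = 2 * sin (θ / 2) ^ 2 := by
  rw [sin_sq_eq_half_sub, mul_div_cancel₀ θ two_ne_zero]; ring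

theorem log_one_sub_cos_of_mem_Ioo {θ : ℝ} (hθ : θ ∈ Ioo 0 (2 * π)) :
    log (1 - cos θ) = log 2 + 2 * log (sin (θ / 2)) := by
  have hsin : sin (θ / 2) ≠ 0 :=
    (sin_pos_of_pos_of_lt_pi (by linarith [hθ.1]) (by linarith [hθ.2])).ne'
  rw [one_sub_cos_eq_two_mul_sin_half_sq, log_mul two_ne_zero (pow_ne_zero 2 hsin), log_pow,
    Nat.cast_ofNat]

theorem intervalIntegrable_log_one_sub_cos (a b : ℝ) :
    IntervalIntegrable (fun θ ↦ log (1 - cos θ)) MeasureTheory.volume a b :=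
  (analyticOnNhd_const.sub analyticOnNhd_cos).meromorphicOn.intervalIntegrable_log

theorem intervalIntegrable_log_sin_half (a b : ℝ) :
    IntervalIntegrable (fun θ ↦ log (sin (θ / 2))) MeasureTheory.volume a b :=
  (analyticOnNhd_sin.comp analyticOnNhd_id.div_const (mapsTo_univ _ _)).meromorphicOn
    |>.intervalIntegrable_log

theorem integral_log_one_sub_cos : ∫ θ in 0..2 * π, log (1 - cos θ) = -(2 * π * log 2) := by
  calc ∫ θ in 0..2 * π, log (1 - cos θ)
      = ∫ θ in 0..2 * π, (log 2 + 2 * log (sin (θ / 2))) :=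
        integral_congr_Ioo_of_le (by positivity) fun θ hθ ↦ log_one_sub_cos_of_mem_Ioo hθ
    _ = 2 * π * log 2 + 2 * (2 * ∫ x in 0..π, log (sin x)) := by
        rw [integral_add intervalIntegrable_const
          ((intervalIntegrable_log_sin_half _ _).const_mul 2),
          integral_const_mul, integral_comp_div (fun x ↦ log (sin x)) two_ne_zero]
        simp
    _ = -(2 * π * log 2) := by rw [integral_log_sin_zero_pi]; ring

/-- Through `x log x`, this shows that `sin θ log (1 - cos θ)` is continuous at the zeros of
`1 - cos θ`. -/
theorem sin_mul_log_one_sub_cos (θ : ℝ) :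
    sin θ * log (1 - cos θ) =
      sin θ * log 2 + 4 * cos (θ / 2) * (sin (θ / 2) * log (sin (θ / 2))) := by
  have hsin_two_mul : sin θ = 2 * sin (θ / 2) * cos (θ / 2) := by
    rw [← sin_two_mul, mul_div_cancel₀ θ two_ne_zero]
  rcases eq_or_ne (sin (θ / 2)) 0 with hsin | hsin
  · simp [hsin_two_mul, hsin]
  · rw [one_sub_cos_eq_two_mul_sin_half_sq, log_mul two_ne_zero (pow_ne_zero 2 hsin), log_pow,
      hsin_two_mul]
    push_cast
    ring

theorem continuous_sin_mul_log_one_sub_cos : Continuous fun θ ↦ sin θ * log (1 - cos θ) := by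
  simp_rw [sin_mul_log_one_sub_cos]
  have hs : Continuous fun θ : ℝ ↦ sin (θ / 2) := by fun_prop
  exact (continuous_sin.mul continuous_const).add
    ((continuous_const.mul (by fun_prop)).mul (continuous_mul_log.comp hs))

theorem hasDerivAt_sin_mul_log_one_sub_cos {θ : ℝ} (hθ : cos θ ≠ 1) :
    HasDerivAt (fun θ ↦ sin θ * log (1 - cos θ)) (cos θ * log (1 - cos θ) + (1 + cos θ)) θ := by
  have hne : 1 - cos θ ≠ 0 := sub_ne_zero.mpr hθ.symm
  refine ((hasDerivAt_sin θ).fun_mul (((hasDerivAt_cos θ).const_sub 1).log hne)).congr_deriv ?_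
  field_simp
  linear_combination sin_sq_add_cos_sq θ

theorem integral_cos_mul_log_one_sub_cos :
    ∫ θ in 0..2 * π, cos θ * log (1 - cos θ) = -(2 * π) := by
  have hderiv : ∀ θ ∈ Ioo 0 (2 * π), HasDerivAt (fun θ ↦ sin θ * log (1 - cos θ) - θ - sin θ)
      (cos θ * log (1 - cos θ)) θ := by
    intro θ hθ
    have hcos : cos θ ≠ 1 := fun h ↦
      hθ.1.ne' ((cos_eq_one_iff_of_lt_of_lt (by linarith [hθ.1, pi_pos]) hθ.2).mp h)
    refine (((hasDerivAt_sin_mul_log_one_sub_cos hcos).sub (hasDerivAt_id θ)).sub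
      (hasDerivAt_sin θ)).congr_deriv ?_
    ring
  rw [integral_eq_sub_of_hasDerivAt_of_le (by positivity)
    ((continuous_sin_mul_log_one_sub_cos.sub continuous_id).sub continuous_sin).continuousOn
    hderiv ((intervalIntegrable_log_one_sub_cos _ _).continuousOn_mul continuous_cos.continuousOn)]
  simp

/-- `∫₀^{2π} (1 - cos θ) log(1 - cos θ) dθ/(2π) = 1 - log 2`. -/
theorem entropy_lambda_one :
    (∫ θ in (0:ℝ)..(2 * π), (1 - Real.cos θ) * Real.log (1 - Real.cos θ)) / (2 * π)
      = 1 - Real.log 2 := by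
  simp_rw [sub_mul, one_mul]
  rw [integral_sub (intervalIntegrable_log_one_sub_cos _ _)
    ((intervalIntegrable_log_one_sub_cos _ _).continuousOn_mul continuous_cos.continuousOn),
    integral_log_one_sub_cos, integral_cos_mul_log_one_sub_cos]
  field_simp
  ring
end

section
/- For a complex p×p matrix α with α·α† < 1, define R(α) := -log det(1 - α·α†) - tr(α·α†) - (1/2)·tr((α·α†)²). Then R(α) > 0 whenever α ≠ 0, and R(α) = o(tr((α·α†)²)) as α → 0. -/
/-!
Let `λᵢ ∈ [0, 1)` be the eigenvalues of `ααᴴ`. Diagonalising, `R(α) = ∑ᵢ r(λᵢ)` with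
`r(x) = -log(1 - x) - x - x²/2 = ∑_{k ≥ 3} xᵏ/k`. The series shows `r > 0` on `(0, 1)` and
`r(x) ≤ x³/(1 - x)`. Since every `λᵢ` is at most `tr(ααᴴ) → 0`, near `0` this gives
`R(α) ≤ 2 tr(ααᴴ) ∑ᵢ λᵢ² = 2 tr(ααᴴ) tr((ααᴴ)²)`.
-/

open Matrix Asymptotics
open scoped ComplexOrder

/-- The remainder in the expansion of `-log det(1 - ααᴴ)`. -/
noncomputable def RRem (p : ℕ) (α : Matrix (Fin p) (Fin p) ℂ) : ℝ :=
  -Real.log (((1 : Matrix (Fin p) (Fin p) ℂ) - α * αᴴ).det.re)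
    - ((α * αᴴ).trace).re - (1 / 2) * (((α * αᴴ) ^ 2).trace).re

open Filter Topology

noncomputable def logRem (x : ℝ) : ℝ := -Real.log (1 - x) - x - x ^ 2 / 2

lemma hasSum_logRem {x : ℝ} (hx : |x| < 1) :
    HasSum (fun n : ℕ => x ^ (n + 3) / (n + 3)) (logRem x) := by
  have hval : logRem x = -Real.log (1 - x) - ∑ i ∈ Finset.range 2, x ^ (i + 1) / (i + 1) := by
    norm_num [logRem, Finset.sum_range_succ]
    ring
  rw [hval]
  exact ((hasSum_nat_add_iff' 2).2 (Real.hasSum_pow_div_log_of_abs_lt_one hx)).congr_fun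
    fun n => by push_cast; ring_nf

lemma logRem_nonneg {x : ℝ} (h0 : 0 ≤ x) (h1 : x < 1) : 0 ≤ logRem x :=
  (hasSum_logRem (by rwa [abs_of_nonneg h0])).nonneg fun n => by positivity

lemma logRem_pos {x : ℝ} (h0 : 0 < x) (h1 : x < 1) : 0 < logRem x :=
  hasSum_lt (f := 0) (i := 0) (fun n => by positivity) (by rw [Pi.zero_apply]; positivity)
    hasSum_zero (hasSum_logRem (by rwa [abs_of_pos h0]))

lemma logRem_le {x : ℝ} (h0 : 0 ≤ x) (h1 : x < 1) : logRem x ≤ x ^ 3 / (1 - x) := by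
  have hgeom : HasSum (fun n : ℕ => x ^ (n + 3)) (x ^ 3 / (1 - x)) := by
    simpa [pow_add, mul_comm, div_eq_mul_inv] using
      (hasSum_geometric_of_lt_one h0 h1).mul_left (x ^ 3)
  refine hasSum_le (fun n => ?_) (hasSum_logRem (by rwa [abs_of_nonneg h0])) hgeom
  exact div_le_self (by positivity) (by linarith)

namespace Matrix.IsHermitian

variable {n 𝕜 : Type*} [Fintype n] [DecidableEq n] [RCLike 𝕜] {A : Matrix n n 𝕜}

lemma det_one_sub_eq_prod (hA : A.IsHermitian) :
    (1 - A).det = ((∏ i, (1 - hA.eigenvalues i) : ℝ) : 𝕜) := by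
  simpa [hA.charpoly_eq, Polynomial.eval_prod] using (A.eval_charpoly 1).symm

lemma trace_pow_eq_sum (hA : A.IsHermitian) (k : ℕ) :
    (A ^ k).trace = ((∑ i, hA.eigenvalues i ^ k : ℝ) : 𝕜) := by
  conv_lhs => rw [hA.spectral_theorem, ← map_pow, Unitary.conjStarAlgAut_apply, trace_mul_cycle,
    Unitary.coe_star_mul_self, Matrix.one_mul, diagonal_pow, trace_diagonal]
  simp

open scoped MatrixOrder in
lemma eigenvalues_lt_one (hA : A.IsHermitian) (h : (1 - A).PosDef) (i : n) :
    hA.eigenvalues i < 1 := by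
  have hmem : 1 - hA.eigenvalues i ∈ spectrum ℝ (1 - A) := by
    rw [← map_one (algebraMap ℝ (Matrix n n 𝕜)), ← spectrum.singleton_sub_eq]
    exact Set.sub_mem_sub rfl (hA.eigenvalues_mem_spectrum_real i)
  linarith [h.isStrictlyPositive.spectrum_pos hmem]

end Matrix.IsHermitian

noncomputable def sqSingularValues {m n 𝕜 : Type*} [Fintype m] [Fintype n] [DecidableEq m]
    [RCLike 𝕜] (α : Matrix m n 𝕜) : m → ℝ :=
  (isHermitian_mul_conjTranspose_self α).eigenvalues

section SqSingularValues

variable {m n : Type*} [Fintype m] [Fintype n] [DecidableEq m] (α : Matrix m n ℂ)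

lemma sqSingularValues_nonneg (i : m) : 0 ≤ sqSingularValues α i :=
  eigenvalues_self_mul_conjTranspose_nonneg α i

lemma sum_sqSingularValues : ∑ i, sqSingularValues α i = (α * αᴴ).trace.re := by
  simp [sqSingularValues, (isHermitian_mul_conjTranspose_self α).trace_eq_sum_eigenvalues,
    Complex.re_sum]

lemma sum_sq_sqSingularValues : ∑ i, sqSingularValues α i ^ 2 = ((α * αᴴ) ^ 2).trace.re := by
  rw [(isHermitian_mul_conjTranspose_self α).trace_pow_eq_sum]
  exact (Complex.ofReal_re _).symm

lemma sqSingularValues_le_trace (i : m) : sqSingularValues α i ≤ (α * αᴴ).trace.re := by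
  rw [← sum_sqSingularValues]
  exact Finset.single_le_sum (fun j _ => sqSingularValues_nonneg α j) (Finset.mem_univ i)

end SqSingularValues

section RRem

variable {p : ℕ} (α : Matrix (Fin p) (Fin p) ℂ)

lemma RRem_eq_sum_logRem (h : ∀ i, sqSingularValues α i < 1) :
    RRem p α = ∑ i, logRem (sqSingularValues α i) := by
  have hA := isHermitian_mul_conjTranspose_self α
  have hlog : ∀ i ∈ Finset.univ, 1 - hA.eigenvalues i ≠ 0 := fun i _ => sub_ne_zero.2 (h i).ne'
  rw [RRem, hA.det_one_sub_eq_prod, hA.trace_eq_sum_eigenvalues, hA.trace_pow_eq_sum]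
  simp only [Complex.coe_algebraMap, Complex.ofReal_re, Complex.re_sum, Real.log_prod hlog]
  simp only [sqSingularValues, logRem, Finset.sum_sub_distrib, Finset.sum_neg_distrib,
    ← Finset.sum_div]
  ring

lemma RRem_pos (h : (1 - α * αᴴ).PosDef) (hα : α ≠ 0) : 0 < RRem p α := by
  have hA := isHermitian_mul_conjTranspose_self α
  have hlt : ∀ i, sqSingularValues α i < 1 := hA.eigenvalues_lt_one h
  obtain ⟨i, hi⟩ : ∃ i, sqSingularValues α i ≠ 0 := by
    by_contra! h0
    exact hα (self_mul_conjTranspose_eq_zero.1 (hA.eigenvalues_eq_zero_iff.1 (funext h0)))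
  rw [RRem_eq_sum_logRem α hlt]
  exact Finset.sum_pos' (fun j _ => logRem_nonneg (sqSingularValues_nonneg α j) (hlt j))
    ⟨i, Finset.mem_univ i, logRem_pos ((sqSingularValues_nonneg α i).lt_of_ne' hi) (hlt i)⟩

lemma abs_RRem_le (h : (α * αᴴ).trace.re ≤ 1 / 2) :
    |RRem p α| ≤ 2 * (α * αᴴ).trace.re * ((α * αᴴ) ^ 2).trace.re := by
  have hle := sqSingularValues_le_trace α
  have hnonneg := sqSingularValues_nonneg α
  have hlt : ∀ i, sqSingularValues α i < 1 := fun i => by linarith [hle i]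
  rw [RRem_eq_sum_logRem α hlt, abs_of_nonneg (Finset.sum_nonneg fun i _ =>
    logRem_nonneg (hnonneg i) (hlt i)), ← sum_sq_sqSingularValues, Finset.mul_sum]
  gcongr with i
  have hx : 1 / 2 ≤ 1 - sqSingularValues α i := by linarith [hle i]
  calc logRem (sqSingularValues α i)
      ≤ sqSingularValues α i ^ 3 / (1 - sqSingularValues α i) := logRem_le (hnonneg i) (hlt i)
    _ ≤ sqSingularValues α i ^ 3 / (1 / 2) := by gcongr; exact pow_nonneg (hnonneg i) 3
    _ = 2 * sqSingularValues α i * sqSingularValues α i ^ 2 := by ring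
    _ ≤ 2 * (α * αᴴ).trace.re * sqSingularValues α i ^ 2 := by gcongr; exact hle i

end RRem

/-- `R(α) > 0` for nonzero strict contractions `α`, and `R(α) = o(tr((ααᴴ)²))` as `α → 0`. -/
theorem remainder_pos_and_littleO (p : ℕ) :
    (∀ α : Matrix (Fin p) (Fin p) ℂ,
        ((1 : Matrix (Fin p) (Fin p) ℂ) - α * αᴴ).PosDef → α ≠ 0 → 0 < RRem p α) ∧
      (fun α : Matrix (Fin p) (Fin p) ℂ => RRem p α)
        =o[nhds 0] fun α => (((α * αᴴ) ^ 2).trace).re := by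
  refine ⟨RRem_pos, ?_⟩
  have htrace : Tendsto (fun α : Matrix (Fin p) (Fin p) ℂ => (α * αᴴ).trace.re) (𝓝 0) (𝓝 0) := by
    have hcont : Continuous fun α : Matrix (Fin p) (Fin p) ℂ => (α * αᴴ).trace.re := by fun_prop
    simpa using hcont.tendsto 0
  have hbound : (fun α => RRem p α) =O[𝓝 0]
      fun α => (α * αᴴ).trace.re * ((α * αᴴ) ^ 2).trace.re := by
    refine IsBigO.of_bound 2 ((htrace.eventually (eventually_le_nhds one_half_pos)).mono
      fun α hα => ?_)
    rw [Real.norm_eq_abs, Real.norm_eq_abs]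
    exact (abs_RRem_le α hα).trans (by rw [mul_assoc]; gcongr; exact le_abs_self _)
  simpa using hbound.trans_isLittleO
    (((isLittleO_one_iff ℝ).2 htrace).mul_isBigO (isBigO_refl _ _))
end

section
/- Let α₀ and f be p×p complex matrices with α₀ a strict contraction, and set ρ^R := (1 - α₀·α₀†)^{1/2}, ρ^L := (1 - α₀†·α₀)^{1/2}. Then (1 - f†·α₀)·(ρ^L)^{-2}·(1 - α₀†·f) - (f† - α₀†)·(ρ^R)^{-2}·(f - α₀) = 1 - f†·f. -/
open Matrix
open scoped ComplexOrder

/-!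
With `a = α₀`, `b = α₀†`, the identity holds in any ring in which `1 - b a` and `1 - a b` are
invertible. The push-through relation `a (1 - b a)⁻¹ = (1 - a b)⁻¹ a` gives
`a (1 - b a)⁻¹ b = (1 - a b)⁻¹ - 1` and `(1 - b a)⁻¹ = 1 + b (1 - a b)⁻¹ a`; expanding both products
and substituting these, everything except `1 - f† f` cancels.
-/

/-- The square root of a positive semidefinite matrix, as defined in the older Mathlib
(removed since). -/
noncomputable def Matrix.PosSemidef.sqrt {n : Type*} [Fintype n] [DecidableEq n] {𝕜 : Type*}
    [RCLike 𝕜] {A : Matrix n n 𝕜} (hA : A.PosSemidef) : Matrix n n 𝕜 :=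
  hA.1.eigenvectorUnitary.1 * diagonal ((↑) ∘ (√·) ∘ hA.1.eigenvalues) *
    (star hA.1.eigenvectorUnitary : Matrix n n 𝕜)

namespace Matrix.PosSemidef

variable {n : Type*} [Fintype n] [DecidableEq n] {𝕜 : Type*} [RCLike 𝕜] {A : Matrix n n 𝕜}

lemma sqrt_mul_self (hA : A.PosSemidef) : hA.sqrt * hA.sqrt = A := by
  have hU : (star hA.1.eigenvectorUnitary : Matrix n n 𝕜) * hA.1.eigenvectorUnitary.1 = 1 :=
    Unitary.coe_star_mul_self _
  have hD : diagonal (((↑) ∘ (√·) ∘ hA.1.eigenvalues : n → 𝕜)) *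
      diagonal ((↑) ∘ (√·) ∘ hA.1.eigenvalues) = diagonal (RCLike.ofReal ∘ hA.1.eigenvalues) := by
    rw [diagonal_mul_diagonal]
    congr 1
    funext i
    simp only [Function.comp]
    rw [← RCLike.ofReal_mul, Real.mul_self_sqrt (hA.eigenvalues_nonneg i)]
  conv_rhs => rw [hA.1.spectral_theorem, Unitary.conjStarAlgAut_apply]
  unfold Matrix.PosSemidef.sqrt
  simp only [Matrix.mul_assoc]
  rw [← Matrix.mul_assoc (star _ : Matrix n n 𝕜) _ (_ * _), hU, Matrix.one_mul,
    ← Matrix.mul_assoc (diagonal _) (diagonal _), hD]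

lemma inv_sqrt_sq (hA : A.PosSemidef) : hA.sqrt⁻¹ ^ 2 = A⁻¹ := by
  rw [sq, ← Matrix.mul_inv_rev, hA.sqrt_mul_self]

end Matrix.PosSemidef

namespace Ring

variable {R : Type*} [Ring R] {a b : R}

theorem mul_inverse_one_sub_mul (hba : IsUnit (1 - b * a)) (hab : IsUnit (1 - a * b)) :
    a * inverse (1 - b * a) = inverse (1 - a * b) * a := by
  have push : (1 - a * b) * a = a * (1 - b * a) := by
    rw [sub_mul, mul_sub, one_mul, mul_one, mul_assoc]
  calc a * inverse (1 - b * a)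
      = inverse (1 - a * b) * ((1 - a * b) * a) * inverse (1 - b * a) := by
        rw [inverse_mul_cancel_left _ _ hab]
    _ = inverse (1 - a * b) * a := by
        rw [push, ← mul_assoc, mul_inverse_cancel_right _ _ hba]

theorem mul_inverse_one_sub_mul_mul (hba : IsUnit (1 - b * a)) (hab : IsUnit (1 - a * b)) :
    a * inverse (1 - b * a) * b = inverse (1 - a * b) - 1 :=
  calc a * inverse (1 - b * a) * b = inverse (1 - a * b) * (a * b) := by
        rw [mul_inverse_one_sub_mul hba hab, mul_assoc]
    _ = inverse (1 - a * b) - inverse (1 - a * b) * (1 - a * b) := by noncomm_ring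
    _ = inverse (1 - a * b) - 1 := by rw [inverse_mul_cancel _ hab]

theorem inverse_one_sub_mul_eq (hba : IsUnit (1 - b * a)) (hab : IsUnit (1 - a * b)) :
    inverse (1 - b * a) = 1 + b * inverse (1 - a * b) * a := by
  rw [mul_inverse_one_sub_mul_mul hab hba]
  abel

theorem schur_identity (hba : IsUnit (1 - b * a)) (hab : IsUnit (1 - a * b)) (g f : R) :
    (1 - g * a) * inverse (1 - b * a) * (1 - b * f)
        - (g - b) * inverse (1 - a * b) * (f - a) = 1 - g * f := by
  have hXb := (mul_inverse_one_sub_mul hab hba).symm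
  have haX := mul_inverse_one_sub_mul hba hab
  have haXb := mul_inverse_one_sub_mul_mul hba hab
  have hX := inverse_one_sub_mul_eq hba hab
  generalize inverse (1 - b * a) = X at *
  generalize inverse (1 - a * b) = Y at *
  calc (1 - g * a) * X * (1 - b * f) - (g - b) * Y * (f - a)
      = X - X * b * f - g * (a * X) + g * (a * X * b) * f
        - g * Y * f + g * (Y * a) + b * Y * f - b * (Y * a) := by noncomm_ring
    _ = 1 - g * f := by
        rw [haXb, haX, hXb, hX]
        noncomm_ring

end Ring

/-- The key algebraic identity of the matrix Schur algorithm: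
`(1 - f†α₀)(ρ^L)⁻²(1 - α₀†f) - (f† - α₀†)(ρ^R)⁻²(f - α₀) = 1 - f†f`. -/
theorem schur_algebraic_identity (p : ℕ) (α₀ f : Matrix (Fin p) (Fin p) ℂ)
    (hR : ((1 : Matrix (Fin p) (Fin p) ℂ) - α₀ * α₀ᴴ).PosDef)
    (hL : ((1 : Matrix (Fin p) (Fin p) ℂ) - α₀ᴴ * α₀).PosDef) :
    (1 - fᴴ * α₀) * (hL.posSemidef.sqrt⁻¹) ^ 2 * (1 - α₀ᴴ * f)
        - (fᴴ - α₀ᴴ) * (hR.posSemidef.sqrt⁻¹) ^ 2 * (f - α₀)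
      = 1 - fᴴ * f := by
  rw [hL.posSemidef.inv_sqrt_sq, hR.posSemidef.inv_sqrt_sq, nonsing_inv_eq_ringInverse,
    nonsing_inv_eq_ringInverse]
  exact Ring.schur_identity hL.isUnit hR.isUnit fᴴ f
end

section
/- Let h be an analytic function on the unit disc with |Im h(z)| < 3π/2 for all z and h(0) real. Then sup_{r<1} ∫₀^{2π} |h(re^{iθ})|² dθ/(2π) ≤ 9π²/2 + h(0)², so h belongs to the Hardy space H²(𝔻). -/
/-!
Since `‖w‖² = Re(w²) + 2 (Im w)²`, the mean of `|h|²` over a circle is the mean of the harmonic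
function `Re(h²)`, which is `Re(h(0)²) ≤ (Re h(0))²`, plus at most twice the square of the bound
on `Im h`.
-/

open Real MeasureTheory Metric

namespace Complex

theorem sq_norm_eq_re_sq_add_two_mul_sq_im (w : ℂ) : ‖w‖ ^ 2 = (w ^ 2).re + 2 * w.im ^ 2 := by
  rw [Complex.sq_norm, normSq_apply, sq, mul_re]
  ring

theorem re_sq_le_sq_re (w : ℂ) : (w ^ 2).re ≤ w.re ^ 2 := by
  rw [sq, mul_re]
  nlinarith [sq_nonneg w.im]

end Complex

section CircleAverage

variable {f : ℂ → ℂ} {c : ℂ} {R : ℝ}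

theorem DifferentiableOn.circleAverage_re (hf : DifferentiableOn ℂ f (closedBall c |R|)) :
    circleAverage (fun z ↦ (f z).re) c R = (f c).re := by
  have hint : CircleIntegrable f c R :=
    (hf.continuousOn.mono sphere_subset_closedBall).circleIntegrable'
  rw [← (hf.diffContOnCl_ball subset_rfl).circleAverage]
  exact Complex.reCLM.circleAverage_comp_comm hint

theorem DifferentiableOn.circleAverage_sq_norm_le {M : ℝ}
    (hf : DifferentiableOn ℂ f (closedBall c |R|))
    (him : ∀ z ∈ sphere c |R|, |(f z).im| ≤ M) :
    circleAverage (fun z ↦ ‖f z‖ ^ 2) c R ≤ (f c).re ^ 2 + 2 * M ^ 2 := by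
  have hcont : ContinuousOn f (sphere c |R|) := hf.continuousOn.mono sphere_subset_closedBall
  have hsq : DifferentiableOn ℂ (fun z ↦ f z ^ 2) (closedBall c |R|) := hf.pow 2
  have hre_int : CircleIntegrable (fun z ↦ (f z ^ 2).re) c R :=
    (Complex.continuous_re.comp_continuousOn (hcont.pow 2)).circleIntegrable'
  have hpointwise : ∀ z ∈ sphere c |R|, ‖f z‖ ^ 2 ≤ (f z ^ 2).re + 2 * M ^ 2 := by
    intro z hz
    rw [Complex.sq_norm_eq_re_sq_add_two_mul_sq_im]
    have := sq_le_sq' (abs_le.mp (him z hz)).1 (abs_le.mp (him z hz)).2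
    linarith
  calc circleAverage (fun z ↦ ‖f z‖ ^ 2) c R
      ≤ circleAverage (fun z ↦ (f z ^ 2).re + 2 * M ^ 2) c R :=
        circleAverage_mono (hcont.norm.pow 2).circleIntegrable'
          (hre_int.add (circleIntegrable_const _ c R)) hpointwise
    _ = (f c ^ 2).re + 2 * M ^ 2 := by
        rw [circleAverage_fun_add hre_int (circleIntegrable_const _ c R), hsq.circleAverage_re,
          circleAverage_const]
    _ ≤ (f c).re ^ 2 + 2 * M ^ 2 := by gcongr; exact Complex.re_sq_le_sq_re _

end CircleAverage

theorem bounded_imaginary_part_H2_general (h : ℂ → ℂ)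
    (hanal : AnalyticOnNhd ℂ h (Metric.ball 0 1))
    (him : ∀ z ∈ Metric.ball (0:ℂ) 1, |(h z).im| < 3 * π / 2) :
    ∀ r : ℝ, 0 ≤ r → r < 1 →
      (∫ θ in (0:ℝ)..(2 * π), ‖h (r * Complex.exp (θ * Complex.I))‖ ^ 2) / (2 * π)
        ≤ 9 * π ^ 2 / 2 + (h 0).re ^ 2 := by
  intro r hr0 hr1
  have hball : closedBall (0 : ℂ) |r| ⊆ ball 0 1 :=
    closedBall_subset_ball (by rwa [abs_of_nonneg hr0])
  have hbound := (hanal.differentiableOn.mono hball).circleAverage_sq_norm_le (M := 3 * π / 2)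
    fun z hz ↦ (him z (hball (sphere_subset_closedBall hz))).le
  rw [circleAverage_def] at hbound
  simp only [circleMap, zero_add, smul_eq_mul] at hbound
  rw [div_eq_inv_mul]
  linarith

/-- If `h` is analytic on the unit disc with `|Im h| < 3π/2` and `h(0)` real, then
`sup_{r<1} ∫₀^{2π} |h(re^{iθ})|² dθ/(2π) ≤ 9π²/2 + h(0)²`, so `h ∈ H²(𝔻)`. -/
theorem bounded_imaginary_part_H2 (h : ℂ → ℂ)
    (hanal : AnalyticOnNhd ℂ h (Metric.ball 0 1))
    (him : ∀ z ∈ Metric.ball (0:ℂ) 1, |(h z).im| < 3 * π / 2)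
    (h0 : (h 0).im = 0) :
    ∀ r : ℝ, 0 ≤ r → r < 1 →
      (∫ θ in (0:ℝ)..(2 * π), ‖h (r * Complex.exp (θ * Complex.I))‖ ^ 2) / (2 * π)
        ≤ 9 * π ^ 2 / 2 + (h 0).re ^ 2 :=
  bounded_imaginary_part_H2_general h hanal him
end

section
/- Let F be a p×p matrix Carathéodory function on the unit disc (analytic, F(0)=1, Re F(z) > 0), and let f(z) := z^{-1}(F(z)-1)(F(z)+1)^{-1} be its Schur transform. Then for all |z| < 1: Re F(z) = (1 - z̄·f(z)†)^{-1}·(1 - |z|²·f(z)†·f(z))·(1 - z·f(z))^{-1}. -/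
open Matrix
open scoped ComplexOrder

attribute [local instance] Matrix.normedAddCommGroup Matrix.normedSpace

/-!
Write `A = F z` and `g = (A - 1)(A + 1)⁻¹` for its Cayley transform, so that `z f(z) = g` and the
right-hand side is `(1 - gᴴ)⁻¹ (1 - gᴴ g) (1 - g)⁻¹`. Positivity of `Re A` forces `A + 1` to be
invertible; then `(1 - g)⁻¹ = (A + 1) / 2`, and `g (A + 1) = A - 1` turns
`(A + 1)ᴴ (1 - gᴴ g) (A + 1)` into `(A + 1)ᴴ (A + 1) - (A - 1)ᴴ (A - 1) = 2 (A + Aᴴ)`.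
-/

namespace Matrix

theorem normSq_smul_conjTranspose_mul_self {m n : Type*} [Fintype m] (z : ℂ) (M : Matrix m n ℂ) :
    (Complex.normSq z : ℂ) • (Mᴴ * M) = (z • M)ᴴ * (z • M) := by
  rw [conjTranspose_smul, smul_mul, Matrix.mul_smul, smul_smul, Complex.normSq_eq_conj_mul_self]
  rfl

variable {n : Type*} [Fintype n] [DecidableEq n]

theorem isUnit_of_posDef_add_conjTranspose {K : Type*} [Field K] [PartialOrder K] [StarRing K]
    {B : Matrix n n K} (hB : (B + Bᴴ).PosDef) : IsUnit B := by
  rw [isUnit_iff_isUnit_det, isUnit_iff_ne_zero]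
  intro hdet
  obtain ⟨v, hv0, hBv⟩ := exists_mulVec_eq_zero_iff.mpr hdet
  have hBHv : star v ⬝ᵥ (Bᴴ *ᵥ v) = 0 := by
    rw [dotProduct_mulVec, ← star_mulVec, hBv, star_zero, zero_dotProduct]
  simpa [add_mulVec, hBv, hBHv] using hB.dotProduct_mulVec_pos hv0

theorem isUnit_add_one_of_posDef_realPart {𝕜 : Type*} [RCLike 𝕜] {A : Matrix n n 𝕜}
    (hA : ((2 : 𝕜)⁻¹ • (A + Aᴴ)).PosDef) : IsUnit (A + 1) := by
  refine isUnit_of_posDef_add_conjTranspose ?_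
  convert (hA.add PosDef.one).smul (two_pos : (0 : 𝕜) < 2) using 1
  rw [conjTranspose_add, conjTranspose_one, smul_add, smul_smul, mul_inv_cancel₀ two_ne_zero,
    one_smul]
  module

section Cayley

variable {K : Type*} [Field K] {A : Matrix n n K}

noncomputable def cayley (A : Matrix n n K) : Matrix n n K := (A - 1) * (A + 1)⁻¹

theorem cayley_mul_add_one (hA : IsUnit (A + 1)) : cayley A * (A + 1) = A - 1 :=
  nonsing_inv_mul_cancel_right _ _ ((isUnit_iff_isUnit_det _).mp hA)

theorem inv_one_sub_cayley [NeZero (2 : K)] (hA : IsUnit (A + 1)) :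
    (1 - cayley A)⁻¹ = (2 : K)⁻¹ • (A + 1) := by
  apply inv_eq_right_inv
  rw [Matrix.mul_smul, sub_mul, one_mul, cayley_mul_add_one hA,
    show A + 1 - (A - 1) = (2 : K) • (1 : Matrix n n K) by module, smul_smul,
    inv_mul_cancel₀ two_ne_zero, one_smul]

theorem inv_one_sub_conjTranspose_cayley [NeZero (2 : K)] [StarRing K] (hA : IsUnit (A + 1)) :
    (1 - (cayley A)ᴴ)⁻¹ = (2 : K)⁻¹ • (A + 1)ᴴ := by
  rw [show 1 - (cayley A)ᴴ = (1 - cayley A)ᴴ by simp, ← conjTranspose_nonsing_inv,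
    inv_one_sub_cayley hA, conjTranspose_smul, star_inv₀, star_ofNat]

theorem conjTranspose_mul_one_sub_conjTranspose_cayley_mul_cayley_mul [StarRing K]
    (hA : IsUnit (A + 1)) :
    (A + 1)ᴴ * (1 - (cayley A)ᴴ * cayley A) * (A + 1) = (2 : K) • (A + Aᴴ) := by
  have hgH : (A + 1)ᴴ * (cayley A)ᴴ = (A - 1)ᴴ := by
    rw [← conjTranspose_mul, cayley_mul_add_one hA]
  rw [mul_sub, mul_one, sub_mul, ← Matrix.mul_assoc, hgH, Matrix.mul_assoc, cayley_mul_add_one hA]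
  simp only [conjTranspose_add, conjTranspose_sub, conjTranspose_one, add_mul, sub_mul,
    mul_add, mul_sub, one_mul, mul_one]
  module

theorem half_add_conjTranspose_eq_cayley [NeZero (2 : K)] [StarRing K] (hA : IsUnit (A + 1)) :
    (2 : K)⁻¹ • (A + Aᴴ)
      = (1 - (cayley A)ᴴ)⁻¹ * (1 - (cayley A)ᴴ * cayley A) * (1 - cayley A)⁻¹ := by
  rw [inv_one_sub_conjTranspose_cayley hA, inv_one_sub_cayley hA, Matrix.smul_mul,
    Matrix.mul_smul, Matrix.smul_mul,
    conjTranspose_mul_one_sub_conjTranspose_cayley_mul_cayley_mul hA, smul_smul, smul_smul,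
    inv_mul_cancel_right₀ two_ne_zero]

end Cayley

end Matrix

theorem caratheodory_real_part_formula_general (p : ℕ)
    (F : ℂ → Matrix (Fin p) (Fin p) ℂ)
    (hF0 : F 0 = 1)
    (hpos : ∀ z ∈ Metric.ball (0:ℂ) 1, ((2 : ℂ)⁻¹ • (F z + (F z)ᴴ)).PosDef) :
    ∀ z ∈ Metric.ball (0:ℂ) 1,
      (2 : ℂ)⁻¹ • (F z + (F z)ᴴ)
        = (1 - (starRingEnd ℂ) z • (z⁻¹ • ((F z - 1) * (F z + 1)⁻¹))ᴴ)⁻¹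
            * (1 - (Complex.normSq z : ℂ) •
                ((z⁻¹ • ((F z - 1) * (F z + 1)⁻¹))ᴴ * (z⁻¹ • ((F z - 1) * (F z + 1)⁻¹))))
            * (1 - z • (z⁻¹ • ((F z - 1) * (F z + 1)⁻¹)))⁻¹ := by
  intro z hz
  -- At `z = 0` this holds because `0⁻¹ = 0` in Lean and `cayley (F 0) = 0`.
  have hzf : z • (z⁻¹ • ((F z - 1) * (F z + 1)⁻¹)) = cayley (F z) := by
    rcases eq_or_ne z 0 with rfl | hz0
    · simp [cayley, hF0]
    · exact smul_inv_smul₀ hz0 _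
  rw [starRingEnd_apply, ← conjTranspose_smul, normSq_smul_conjTranspose_mul_self, hzf]
  exact half_add_conjTranspose_eq_cayley (isUnit_add_one_of_posDef_realPart (hpos z hz))

/-- For a matrix Carathéodory function `F` on the unit disc (analytic, `F(0) = 1`,
`Re F > 0`) with Schur transform `f(z) = z⁻¹ (F(z)-1)(F(z)+1)⁻¹`, one has
`Re F(z) = (1 - z̄ f(z)†)⁻¹ (1 - |z|² f(z)† f(z)) (1 - z f(z))⁻¹`. -/
theorem caratheodory_real_part_formula (p : ℕ)
    (F : ℂ → Matrix (Fin p) (Fin p) ℂ)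
    (hF : AnalyticOnNhd ℂ F (Metric.ball 0 1))
    (hF0 : F 0 = 1)
    (hpos : ∀ z ∈ Metric.ball (0:ℂ) 1, ((2 : ℂ)⁻¹ • (F z + (F z)ᴴ)).PosDef) :
    ∀ z ∈ Metric.ball (0:ℂ) 1,
      (2 : ℂ)⁻¹ • (F z + (F z)ᴴ)
        = (1 - (starRingEnd ℂ) z • (z⁻¹ • ((F z - 1) * (F z + 1)⁻¹))ᴴ)⁻¹
            * (1 - (Complex.normSq z : ℂ) •
                ((z⁻¹ • ((F z - 1) * (F z + 1)⁻¹))ᴴ * (z⁻¹ • ((F z - 1) * (F z + 1)⁻¹))))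
            * (1 - z • (z⁻¹ • ((F z - 1) * (F z + 1)⁻¹)))⁻¹ :=
  caratheodory_real_part_formula_general p F hF0 hpos
end
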